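/- arXiv:1912.03646 — 2 statements merged into one kernel-verified Lean document; each statement's English description precedes it below -/
import Mathlib

section
/- Let M ≥ 2, K ≥ 1 and d ≥ 1 be natural numbers, let U : 𝒦 → Matrix 𝒮 𝒮 ℂ be any family of unitary matrices, and let Π be the associated privacy test. Then every biseparable density matrix σ on 𝒦 × 𝒮 satisfies Re Tr[Π · σ] ≤ 1/K. (Consequently, a biseparable state can never pass any γ-privacy test with probability greater than 1/K.) -/
open Matrix Kronecker
open scoped ComplexOrder

open scoped Classical in
noncomputable def matSqrt {n : Type*} [Fintype n] [DecidableEq n] (A : Matrix n n ℂ) :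
    Matrix n n ℂ :=
  if h : A.PosSemidef then
    (h.1.eigenvectorUnitary : Matrix n n ℂ) * diagonal ((↑) ∘ (√·) ∘ h.1.eigenvalues) *
      (star h.1.eigenvectorUnitary : Matrix n n ℂ)
  else 0

noncomputable def rootFidelity {n : Type*} [Fintype n] [DecidableEq n]
    (ρ σ : Matrix n n ℂ) : ℝ :=
  (matSqrt (matSqrt σ * ρ * matSqrt σ)).trace.re

noncomputable def fidelity {n : Type*} [Fintype n] [DecidableEq n]
    (ρ σ : Matrix n n ℂ) : ℝ :=
  (rootFidelity ρ σ) ^ 2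

noncomputable def traceNorm {n : Type*} [Fintype n] [DecidableEq n] (A : Matrix n n ℂ) : ℝ :=
  (matSqrt (Aᴴ * A)).trace.re

/-- The set of attainable type-II error values in hypothesis testing. -/
def testValues {n : Type*} [Fintype n] [DecidableEq n] (ρ σ : Matrix n n ℂ) (ε : ℝ) :
    Set ℝ :=
  { x | ∃ Λ : Matrix n n ℂ, Λ.PosSemidef ∧ (1 - Λ).PosSemidef ∧
      1 - ε ≤ (Λ * ρ).trace.re ∧ x = (Λ * σ).trace.re }

/-- ε-hypothesis-testing relative entropy. -/
noncomputable def Dh {n : Type*} [Fintype n] [DecidableEq n]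
    (ρ σ : Matrix n n ℂ) (ε : ℝ) : ℝ :=
  - Real.logb 2 (sInf (testValues ρ σ ε))

/-- GHZ unit vector. -/
noncomputable def ghz (M K : ℕ) : (Fin M → Fin K) → ℂ :=
  fun f => if ∃ c, ∀ m, f m = c then ((Real.sqrt K : ℂ))⁻¹ else 0

/-- GHZ rank-one projection. -/
noncomputable def ghzProj (M K : ℕ) : Matrix (Fin M → Fin K) (Fin M → Fin K) ℂ :=
  Matrix.vecMulVec (ghz M K) (star ∘ ghz M K)

/-- The twisting unitary. -/
def twist (M K d : ℕ)
    (U : (Fin M → Fin K) → Matrix (Fin M → Fin d) (Fin M → Fin d) ℂ) :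
    Matrix ((Fin M → Fin K) × (Fin M → Fin d)) ((Fin M → Fin K) × (Fin M → Fin d)) ℂ :=
  Matrix.of fun p q => if p.1 = q.1 then U p.1 p.2 q.2 else 0

/-- The privacy test `Π = W (Φ ⊗ 1) Wᴴ`. -/
noncomputable def privacyTest (M K d : ℕ)
    (U : (Fin M → Fin K) → Matrix (Fin M → Fin d) (Fin M → Fin d) ℂ) :
    Matrix ((Fin M → Fin K) × (Fin M → Fin d)) ((Fin M → Fin K) × (Fin M → Fin d)) ℂ :=
  twist M K d U * (ghzProj M K ⊗ₖ (1 : Matrix (Fin M → Fin d) (Fin M → Fin d) ℂ)) *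
    (twist M K d U)ᴴ

/-- The private state `γ = W (Φ ⊗ ω) Wᴴ`. -/
noncomputable def privateState (M K d : ℕ)
    (U : (Fin M → Fin K) → Matrix (Fin M → Fin d) (Fin M → Fin d) ℂ)
    (ω : Matrix (Fin M → Fin d) (Fin M → Fin d) ℂ) :
    Matrix ((Fin M → Fin K) × (Fin M → Fin d)) ((Fin M → Fin K) × (Fin M → Fin d)) ℂ :=
  twist M K d U * (ghzProj M K ⊗ₖ ω) * (twist M K d U)ᴴ

/-- A vector on `𝒦 × 𝒮` is product across the bipartition `J | Jᶜ` of the parties. -/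
def IsProductAcross {M K d : ℕ} (J : Set (Fin M))
    (v : (Fin M → Fin K) × (Fin M → Fin d) → ℂ) : Prop :=
  ∃ (v₁ : ((↥J) → Fin K) × ((↥J) → Fin d) → ℂ)
    (v₂ : ((↥(Jᶜ)) → Fin K) × ((↥(Jᶜ)) → Fin d) → ℂ),
    ∀ (f : Fin M → Fin K) (x : Fin M → Fin d),
      v (f, x) = v₁ (fun m => f m.1, fun m => x m.1) * v₂ (fun m => f m.1, fun m => x m.1)

/-- Biseparability: a finite convex combination of pure states, each product across
some nontrivial bipartition of the parties. -/
def Biseparable {M K d : ℕ}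
    (σ : Matrix ((Fin M → Fin K) × (Fin M → Fin d))
      ((Fin M → Fin K) × (Fin M → Fin d)) ℂ) : Prop :=
  ∃ (N : ℕ) (p : Fin N → ℝ) (w : Fin N → ((Fin M → Fin K) × (Fin M → Fin d)) → ℂ)
    (J : Fin N → Set (Fin M)),
    (∀ t, 0 ≤ p t) ∧ (∑ t, p t = 1) ∧
    (∀ t, ∑ i, ‖w t i‖ ^ 2 = 1) ∧
    (∀ t, J t ≠ ∅ ∧ J t ≠ Set.univ ∧ IsProductAcross (J t) (w t)) ∧
    σ = ∑ t, (p t : ℂ) • Matrix.vecMulVec (w t) (star ∘ w t)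

/-- Partial trace over the second tensor factor. -/
noncomputable def partialTrace₂ {A B : Type*} [Fintype B] (τ : Matrix (A × B) (A × B) ℂ) :
    Matrix A A ℂ :=
  Matrix.of fun a a' => ∑ b, τ (a, b) (a', b)

/-- Matrix logarithm of a Hermitian matrix via the spectral functional calculus. -/
noncomputable def matLog {n : Type*} [Fintype n] [DecidableEq n] (A : Matrix n n ℂ) :
    Matrix n n ℂ :=
  if hA : A.IsHermitian then
    (hA.eigenvectorUnitary : Matrix n n ℂ) *
      Matrix.diagonal (fun i => (Real.log (hA.eigenvalues i) : ℂ)) *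
      (star hA.eigenvectorUnitary : Matrix n n ℂ)
  else 0

/-!
For a pure state `w`, projecting `Wᴴ w` onto `Φ ⊗ 1` gives
`Tr[Π w wᴴ] = ‖∑_c U_cᴴ w_c‖² / K`, where `w_c = w ((c, …, c), ·)` is the slice of `w` at the
constant key `c`. By the triangle inequality and unitarity this is at most `(∑_c ‖w_c‖)² / K`.
If `w = v₁ ⊗ v₂` across `J | Jᶜ`, then `‖w_c‖ = ‖v₁(c, ·)‖ ‖v₂(c, ·)‖`, and Cauchy–Schwarz bounds
the sum over `c` of these products by `‖v₁‖ ‖v₂‖ = 1`, because the constant keys of either side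
are only some of its keys. A biseparable state is a convex mixture of such pure states.
-/

theorem Finset.sum_comp_le_sum_of_injective {ι κ : Type*} [Fintype ι] [Fintype κ] [DecidableEq κ]
    {e : ι → κ} (he : Function.Injective e) {g : κ → ℝ} (hg : ∀ j, 0 ≤ g j) :
    ∑ i, g (e i) ≤ ∑ j, g j := by
  rw [← Finset.sum_image he.injOn]
  exact Finset.sum_le_univ_sum_of_nonneg hg

theorem sum_mul_restrict_compl {ι γ R : Type*} [Fintype ι] [Fintype γ] [DecidableEq ι]
    [CommSemiring R] (J : Set ι) [DecidablePred (· ∈ J)] (A : (J → γ) → R) (B : (↥Jᶜ → γ) → R) :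
    ∑ x : ι → γ, A (fun i => x i) * B (fun i => x i) = (∑ a, A a) * ∑ b, B b := by
  rw [Finset.sum_mul_sum, ← Fintype.sum_prod_type']
  exact (Equiv.piEquivPiSubtypeProd (· ∈ J) fun _ => γ).sum_comp fun p => A p.1 * B p.2

theorem sum_sqrt_apply_const_le_sqrt_sum {ι γ : Type*} [Fintype ι] [Fintype γ] [DecidableEq ι]
    [DecidableEq γ] {J : Set ι} [DecidablePred (· ∈ J)] (hJ : J.Nonempty) (hJc : Jᶜ.Nonempty)
    {μ : (ι → γ) → ℝ} {A : (J → γ) → ℝ} {B : (↥Jᶜ → γ) → ℝ} (hA : ∀ a, 0 ≤ A a)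
    (hB : ∀ b, 0 ≤ B b) (hμ : ∀ x, μ x = A (fun i => x i) * B (fun i => x i)) :
    ∑ c : γ, √(μ fun _ => c) ≤ √(∑ x, μ x) := by
  have : Nonempty J := hJ.to_subtype
  have : Nonempty ↥Jᶜ := hJc.to_subtype
  calc ∑ c : γ, √(μ fun _ => c)
      = ∑ c : γ, √(A fun _ => c) * √(B fun _ => c) := by
        simp only [hμ, Real.sqrt_mul (hA _)]
    _ ≤ √(∑ c : γ, A fun _ => c) * √(∑ c : γ, B fun _ => c) :=
        Real.sum_sqrt_mul_sqrt_le _ (fun _ => hA _) fun _ => hB _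
    _ ≤ √(∑ a, A a) * √(∑ b, B b) := by
        gcongr
        · exact Finset.sum_comp_le_sum_of_injective Function.const_injective hA
        · exact Finset.sum_comp_le_sum_of_injective Function.const_injective hB
    _ = √(∑ x, μ x) := by
        rw [← Real.sqrt_mul (Finset.sum_nonneg fun a _ => hA a), ← sum_mul_restrict_compl]
        simp only [hμ]

theorem Matrix.trace_mul_conjTranspose_mul_vecMulVec {n R : Type*} [Fintype n] [CommSemiring R]
    [StarRing R] (A B : Matrix n n R) (w : n → R) :
    (A * B * Aᴴ * vecMulVec w (star w)).trace = star (Aᴴ *ᵥ w) ⬝ᵥ (B *ᵥ (Aᴴ *ᵥ w)) := by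
  rw [mul_vecMulVec, trace_vecMulVec, dotProduct_comm, ← mulVec_mulVec, ← mulVec_mulVec,
    dotProduct_mulVec, star_mulVec, conjTranspose_conjTranspose]

theorem star_dotProduct_vecMulVec_kronecker_one_mulVec {κ S : Type*} [Fintype κ] [Fintype S]
    [DecidableEq S] (φ : κ → ℂ) (y : κ × S → ℂ) :
    star y ⬝ᵥ ((vecMulVec φ (star φ) ⊗ₖ (1 : Matrix S S ℂ)) *ᵥ y)
      = ((∑ z, ‖∑ f, star (φ f) * y (f, z)‖ ^ 2 : ℝ) : ℂ) := by
  simp only [mulVec, dotProduct, Fintype.sum_prod_type, kroneckerMap_apply, vecMulVec_apply,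
    one_apply, mul_ite, mul_one, mul_zero, ite_mul, zero_mul, Finset.sum_ite_eq, Finset.mem_univ,
    if_true, Pi.star_apply]
  rw [Finset.sum_comm]
  push_cast
  refine Finset.sum_congr rfl fun z _ => ?_
  rw [← Complex.conj_mul', map_sum, Finset.sum_mul]
  refine Finset.sum_congr rfl fun f _ => ?_
  rw [Finset.mul_sum, Finset.mul_sum]
  refine Finset.sum_congr rfl fun g _ => ?_
  simp only [map_mul, Complex.star_def, Complex.conj_conj]
  ring

theorem Matrix.norm_toLp_mulVec_of_mem_unitaryGroup {n 𝕜 : Type*} [Fintype n] [DecidableEq n]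
    [RCLike 𝕜] {A : Matrix n n 𝕜} (hA : A ∈ unitaryGroup n 𝕜) (v : n → 𝕜) :
    ‖WithLp.toLp 2 (A *ᵥ v)‖ = ‖WithLp.toLp 2 v‖ :=
  (toEuclideanCLM (n := n) (𝕜 := 𝕜) A).norm_map_of_mem_unitary (Unitary.map_mem _ hA) _

theorem re_trace_mul_sum_smul_le {n ι : Type*} [Fintype n] [Fintype ι] (A : Matrix n n ℂ)
    {ρ : ι → Matrix n n ℂ} {p : ι → ℝ} {b : ℝ} (hp0 : ∀ t, 0 ≤ p t) (hp1 : ∑ t, p t = 1)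
    (hρ : ∀ t, (A * ρ t).trace.re ≤ b) :
    (A * ∑ t, (p t : ℂ) • ρ t).trace.re ≤ b := by
  simp only [Finset.mul_sum, mul_smul_comm, trace_sum, trace_smul, Complex.re_sum, smul_eq_mul,
    Complex.re_ofReal_mul]
  calc ∑ t, p t * (A * ρ t).trace.re ≤ ∑ t, p t * b :=
        Finset.sum_le_sum fun t _ => mul_le_mul_of_nonneg_left (hρ t) (hp0 t)
    _ = b := by rw [← Finset.sum_mul, hp1, one_mul]

noncomputable def keyWeight {κ S : Type*} [Fintype S] (w : κ × S → ℂ) (f : κ) : ℝ :=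
  ∑ x, ‖w (f, x)‖ ^ 2

theorem sum_keyWeight {κ S : Type*} [Fintype κ] [Fintype S] (w : κ × S → ℂ) :
    ∑ f, keyWeight w f = ∑ i, ‖w i‖ ^ 2 :=
  (Fintype.sum_prod_type fun i => ‖w i‖ ^ 2).symm

theorem IsProductAcross.sum_sqrt_keyWeight_const_le {M K d : ℕ} {J : Set (Fin M)}
    {w : (Fin M → Fin K) × (Fin M → Fin d) → ℂ} (hw : IsProductAcross J w) (hJ : J.Nonempty)
    (hJc : Jᶜ.Nonempty) :
    ∑ c : Fin K, √(keyWeight w fun _ => c) ≤ √(∑ f, keyWeight w f) := by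
  classical
  obtain ⟨v₁, v₂, hv⟩ := hw
  refine sum_sqrt_apply_const_le_sqrt_sum hJ hJc (A := fun g => ∑ a, ‖v₁ (g, a)‖ ^ 2)
    (B := fun g => ∑ b, ‖v₂ (g, b)‖ ^ 2) (fun _ => by positivity) (fun _ => by positivity)
    fun f => ?_
  simp only [keyWeight, hv, norm_mul, mul_pow]
  exact sum_mul_restrict_compl J (fun a => ‖v₁ (fun m => f m, a)‖ ^ 2)
    fun b => ‖v₂ (fun m => f m, b)‖ ^ 2

theorem ghz_const (M K : ℕ) (c : Fin K) : ghz M K (fun _ => c) = (√K : ℂ)⁻¹ :=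
  if_pos ⟨c, fun _ => rfl⟩

theorem sum_star_ghz_mul (M K : ℕ) [Nonempty (Fin M)] (F : (Fin M → Fin K) → ℂ) :
    ∑ f, star (ghz M K f) * F f = (√K : ℂ)⁻¹ * ∑ c, F fun _ => c := by
  rw [Finset.mul_sum]
  refine (Fintype.sum_of_injective (fun c _ => c) Function.const_injective _ _
    (fun f hf => ?_) fun c => ?_).symm
  · have : ¬ ∃ c, ∀ m, f m = c := fun ⟨c, hc⟩ => hf ⟨c, funext fun m => (hc m).symm⟩
    simp [ghz, this]
  · rw [ghz_const, star_inv₀, Complex.star_def, Complex.conj_ofReal]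

theorem twist_conjTranspose_mulVec (M K d : ℕ)
    (U : (Fin M → Fin K) → Matrix (Fin M → Fin d) (Fin M → Fin d) ℂ)
    (w : (Fin M → Fin K) × (Fin M → Fin d) → ℂ) (f : Fin M → Fin K) (z : Fin M → Fin d) :
    ((twist M K d U)ᴴ *ᵥ w) (f, z) = ((U f)ᴴ *ᵥ Function.curry w f) z := by
  simp [mulVec, dotProduct, twist, Fintype.sum_prod_type, Function.curry, apply_ite, ite_mul]

theorem re_trace_privacyTest_mul_vecMulVec (M K d : ℕ) [Nonempty (Fin M)]
    (U : (Fin M → Fin K) → Matrix (Fin M → Fin d) (Fin M → Fin d) ℂ)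
    (w : (Fin M → Fin K) × (Fin M → Fin d) → ℂ) :
    (privacyTest M K d U * vecMulVec w (star ∘ w)).trace.re
      = (K : ℝ)⁻¹ * ‖∑ c : Fin K,
          WithLp.toLp 2 ((U fun _ => c)ᴴ *ᵥ Function.curry w fun _ => c)‖ ^ 2 := by
  rw [privacyTest, ghzProj, show star ∘ w = star w from rfl,
    show star ∘ ghz M K = star (ghz M K) from rfl,
    trace_mul_conjTranspose_mul_vecMulVec, star_dotProduct_vecMulVec_kronecker_one_mulVec,
    Complex.ofReal_re, EuclideanSpace.norm_sq_eq, Finset.mul_sum]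
  refine Finset.sum_congr rfl fun z _ => ?_
  simp only [twist_conjTranspose_mulVec, sum_star_ghz_mul, norm_mul, mul_pow, norm_inv,
    WithLp.ofLp_sum, Finset.sum_apply, Complex.norm_real, Real.norm_eq_abs, inv_pow, sq_abs,
    Real.sq_sqrt (Nat.cast_nonneg K)]

theorem re_trace_privacyTest_mul_vecMulVec_le {M K d : ℕ}
    {U : (Fin M → Fin K) → Matrix (Fin M → Fin d) (Fin M → Fin d) ℂ}
    (hU : ∀ f, U f ∈ unitaryGroup (Fin M → Fin d) ℂ)
    {w : (Fin M → Fin K) × (Fin M → Fin d) → ℂ} (hw : ∑ i, ‖w i‖ ^ 2 = 1) {J : Set (Fin M)}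
    (hJ : J ≠ ∅) (hJu : J ≠ Set.univ) (hwJ : IsProductAcross J w) :
    (privacyTest M K d U * vecMulVec w (star ∘ w)).trace.re ≤ 1 / K := by
  have hJ' : J.Nonempty := Set.nonempty_iff_ne_empty.2 hJ
  have : Nonempty (Fin M) := ⟨hJ'.some⟩
  have hsum := hwJ.sum_sqrt_keyWeight_const_le hJ' (Set.nonempty_compl.2 hJu)
  rw [sum_keyWeight, hw, Real.sqrt_one] at hsum
  calc (privacyTest M K d U * vecMulVec w (star ∘ w)).trace.re
      = (K : ℝ)⁻¹ * ‖∑ c : Fin K,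
          WithLp.toLp 2 ((U fun _ => c)ᴴ *ᵥ Function.curry w fun _ => c)‖ ^ 2 :=
        re_trace_privacyTest_mul_vecMulVec M K d U w
    _ ≤ (K : ℝ)⁻¹ * (∑ c : Fin K, √(keyWeight w fun _ => c)) ^ 2 := by
        gcongr
        refine (norm_sum_le _ _).trans_eq (Finset.sum_congr rfl fun c _ => ?_)
        exact (norm_toLp_mulVec_of_mem_unitaryGroup (Unitary.star_mem (hU _)) _).trans
          (EuclideanSpace.norm_eq _)
    _ ≤ (K : ℝ)⁻¹ * 1 := by
        gcongr
        exact pow_le_one₀ (by positivity) hsum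
    _ = 1 / K := by rw [mul_one, one_div]

theorem stmt_0_general (M K d : ℕ)
    (U : (Fin M → Fin K) → Matrix (Fin M → Fin d) (Fin M → Fin d) ℂ)
    (hU : ∀ f, U f ∈ Matrix.unitaryGroup (Fin M → Fin d) ℂ)
    (σ : Matrix ((Fin M → Fin K) × (Fin M → Fin d))
      ((Fin M → Fin K) × (Fin M → Fin d)) ℂ)
    (hbisep : Biseparable σ) :
    (privacyTest M K d U * σ).trace.re ≤ 1 / (K : ℝ) := by
  obtain ⟨N, p, w, J, hp0, hp1, hw, hJ, rfl⟩ := hbisep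
  exact re_trace_mul_sum_smul_le _ hp0 hp1 fun t =>
    re_trace_privacyTest_mul_vecMulVec_le hU (hw t) (hJ t).1 (hJ t).2.1 (hJ t).2.2

/-- Every biseparable density matrix passes the privacy test with
probability at most `1/K`. -/
theorem stmt_0 (M K d : ℕ) (hM : 2 ≤ M) (hK : 1 ≤ K) (hd : 1 ≤ d)
    (U : (Fin M → Fin K) → Matrix (Fin M → Fin d) (Fin M → Fin d) ℂ)
    (hU : ∀ f, U f ∈ Matrix.unitaryGroup (Fin M → Fin d) ℂ)
    (σ : Matrix ((Fin M → Fin K) × (Fin M → Fin d))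
      ((Fin M → Fin K) × (Fin M → Fin d)) ℂ)
    (hσ : σ.PosSemidef) (hσtr : σ.trace = 1)
    (hbisep : Biseparable σ) :
    (privacyTest M K d U * σ).trace.re ≤ 1 / (K : ℝ) :=
  stmt_0_general M K d U hU σ hbisep
end

section
/- Let G be a connected simple graph on a finite vertex set V with at least two vertices, and let w : Sym2 V → ℝ be an edge-weight function. If T is a spanning tree of G whose total weight Σ_{e ∈ edges(T)} w(e) is minimal among all spanning trees of G, then T is a minimum bottleneck spanning tree: for every spanning tree T' of G, the maximum edge weight of T is at most the maximum edge weight of T', i.e. max_{e ∈ edges(T)} w(e) ≤ max_{e ∈ edges(T')} w(e). -/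
/-!
Cut property: deleting an edge `e` from a spanning tree `T` splits the vertices into two sides,
and any other spanning tree `T'` contains an edge `f` crossing between them. Exchanging `e` for
`f` gives a spanning tree again, so if `T` has minimum total weight then `w e ≤ w f`. Applied to
the heaviest edge of `T`, this bounds the bottleneck of `T` by that of `T'`.
-/

/-- A spanning tree of `G`: a subgraph (on the same, full vertex set) that is
connected and acyclic. -/
def IsSpanningTree {V : Type*} (G T : SimpleGraph V) : Prop :=
  T ≤ G ∧ T.Connected ∧ T.IsAcyclic

theorem finsum_mem_insert_sdiff_singleton_add {α M : Type*} [AddCommMonoid M] {s : Set α}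
    {e f : α} (hs : s.Finite) (he : e ∈ s) (hf : f ∉ s) (w : α → M) :
    ∑ᶠ i ∈ insert f (s \ {e}), w i + w e = ∑ᶠ i ∈ s, w i + w f := by
  have hrest : (s \ {e}).Finite := hs.sdiff
  conv_rhs => rw [← Set.insert_sdiff_self_of_mem he]
  rw [finsum_mem_insert w (fun h => hf h.1) hrest,
    finsum_mem_insert w (fun h => h.2 rfl) hrest]
  abel

namespace SimpleGraph

variable {V : Type*} {T : SimpleGraph V} {a b v x y : V}

theorem Reachable.reachable_deleteEdges_or (h : T.Reachable v a) :
    (T.deleteEdges {s(a, b)}).Reachable v a ∨ (T.deleteEdges {s(a, b)}).Reachable v b := by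
  classical
  obtain ⟨p, hp⟩ := h.exists_isPath
  by_cases hab : s(a, b) ∈ p.edges
  · have hb := p.snd_mem_support_of_mem_edges hab
    have ha := p.endpoint_notMem_support_takeUntil hp hb (p.adj_of_mem_edges hab).ne
    refine .inr ⟨(p.takeUntil b hb).toDeleteEdges {s(a, b)} fun e he => ?_⟩
    rintro rfl
    exact ha ((p.takeUntil b hb).fst_mem_support_of_mem_edges he)
  · exact .inl ⟨p.toDeleteEdges {s(a, b)} fun e he h => hab (h ▸ he)⟩

theorem edgeSet_deleteEdges_sup_edge (hxy : x ≠ y) :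
    (T.deleteEdges {s(a, b)} ⊔ edge x y).edgeSet = insert s(x, y) (T.edgeSet \ {s(a, b)}) := by
  rw [edgeSet_sup, edgeSet_deleteEdges, edgeSet_edge_of_ne hxy, Set.union_singleton]

end SimpleGraph

open SimpleGraph

variable {V : Type*} {G T : SimpleGraph V} {a b x y : V} in
theorem IsSpanningTree.deleteEdges_sup_edge (hT : IsSpanningTree G T) (hxy : G.Adj x y)
    (hx : (T.deleteEdges {s(a, b)}).Reachable a x)
    (hy : ¬(T.deleteEdges {s(a, b)}).Reachable a y) :
    IsSpanningTree G (T.deleteEdges {s(a, b)} ⊔ edge x y) := by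
  obtain ⟨hTG, hTconn, hTacyc⟩ := hT
  set T₀ := T.deleteEdges {s(a, b)}
  have hT₀ : T₀ ≤ T₀ ⊔ edge x y := le_sup_left
  have hxy' : (T₀ ⊔ edge x y).Adj x y := Or.inr ((edge_adj ..).mpr ⟨.inl ⟨rfl, rfl⟩, hxy.ne⟩)
  have hyb : T₀.Reachable y b :=
    ((hTconn y a).reachable_deleteEdges_or).resolve_left fun h => hy h.symm
  have hba : (T₀ ⊔ edge x y).Reachable b a :=
    ((hx.mono hT₀).trans (hxy'.reachable.trans (hyb.mono hT₀))).symm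
  have hreach_a (v : V) : (T₀ ⊔ edge x y).Reachable v a :=
    ((hTconn v a).reachable_deleteEdges_or).elim (·.mono hT₀) (fun h => (h.mono hT₀).trans hba)
  refine ⟨sup_le ((deleteEdges_le _).trans hTG) ((edge_le_iff G).mpr (.inr hxy)), ?_, ?_⟩
  · exact (connected_iff_exists_forall_reachable _).mpr ⟨a, fun v => (hreach_a v).symm⟩
  · exact (hTacyc.anti (deleteEdges_le _)).sup_edge_of_not_reachable fun h => hy (hx.trans h)

def IsMinSpanningTree {V M : Type*} [AddCommMonoid M] [Preorder M] (G T : SimpleGraph V)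
    (w : Sym2 V → M) : Prop :=
  IsSpanningTree G T ∧
    ∀ T' : SimpleGraph V, IsSpanningTree G T' → ∑ᶠ e ∈ T.edgeSet, w e ≤ ∑ᶠ e ∈ T'.edgeSet, w e

theorem IsMinSpanningTree.exists_mem_edgeSet_le {V M : Type*} [Finite V] [AddCommMonoid M]
    [LinearOrder M] [IsOrderedCancelAddMonoid M] {G T T' : SimpleGraph V} {w : Sym2 V → M}
    {e : Sym2 V} (hT : IsMinSpanningTree G T w) (hT' : IsSpanningTree G T')
    (he : e ∈ T.edgeSet) : ∃ f ∈ T'.edgeSet, w e ≤ w f := by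
  induction e using Sym2.ind with | h a b => ?_
  set T₀ := T.deleteEdges {s(a, b)}
  have hcut : ¬T₀.Reachable a b := isBridge_iff.mp (isAcyclic_iff_forall_isBridge.mp hT.1.2.2 he)
  obtain ⟨p⟩ := hT'.2.1.preconnected a b
  obtain ⟨⟨⟨x, y⟩, hxy⟩, -, hx, hy⟩ :=
    p.exists_boundary_dart {v | T₀.Reachable a v} (Reachable.refl a) hcut
  change T₀.Reachable a x at hx
  change ¬T₀.Reachable a y at hy
  by_cases hf : s(x, y) ∈ T.edgeSet
  · have hfe : s(x, y) = s(a, b) := by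
      by_contra hne
      have hxy₀ : s(x, y) ∈ T₀.edgeSet := by rw [edgeSet_deleteEdges]; exact ⟨hf, hne⟩
      exact hy (hx.trans (Adj.reachable hxy₀))
    exact ⟨s(x, y), hxy, hfe ▸ le_rfl⟩
  · have hsum := hT.2 _ (hT.1.deleteEdges_sup_edge (hT'.1 hxy) hx hy)
    rw [edgeSet_deleteEdges_sup_edge hxy.ne] at hsum
    have hexchange : ∑ᶠ e ∈ T.edgeSet, w e + w s(a, b) ≤ ∑ᶠ e ∈ T.edgeSet, w e + w s(x, y) :=
      calc ∑ᶠ e ∈ T.edgeSet, w e + w s(a, b)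
          ≤ ∑ᶠ e ∈ insert s(x, y) (T.edgeSet \ {s(a, b)}), w e + w s(a, b) := by gcongr
        _ = ∑ᶠ e ∈ T.edgeSet, w e + w s(x, y) :=
          finsum_mem_insert_sdiff_singleton_add (Set.toFinite _) he hf w
    exact ⟨s(x, y), hxy, le_of_add_le_add_left hexchange⟩

theorem stmt_16_general {V : Type*} [Fintype V] (hV : 2 ≤ Fintype.card V)
    (G : SimpleGraph V) (w : Sym2 V → ℝ)
    (T : SimpleGraph V) (hT : IsSpanningTree G T)
    (hmin : ∀ T' : SimpleGraph V, IsSpanningTree G T' →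
      (∑ᶠ e ∈ T.edgeSet, w e) ≤ ∑ᶠ e ∈ T'.edgeSet, w e) :
    ∀ T' : SimpleGraph V, IsSpanningTree G T' →
      sSup (w '' T.edgeSet) ≤ sSup (w '' T'.edgeSet) := by
  intro T' hT'
  have : Nontrivial V := Fintype.one_lt_card_iff_nontrivial.mp hV
  obtain ⟨v⟩ := hT.2.1.nonempty
  obtain ⟨u, hvu⟩ := hT.2.1.preconnected.exists_adj_of_nontrivial v
  refine csSup_le ⟨w s(v, u), s(v, u), hvu, rfl⟩ ?_
  rintro _ ⟨e, he, rfl⟩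
  obtain ⟨f, hf, hef⟩ := IsMinSpanningTree.exists_mem_edgeSet_le ⟨hT, hmin⟩ hT' he
  exact hef.trans (le_csSup (Set.toFinite _).bddAbove ⟨f, hf, rfl⟩)

/-- every minimum (total-weight) spanning tree is a minimum bottleneck
spanning tree: its maximum edge weight is at most that of any other spanning tree. -/
theorem stmt_16 {V : Type*} [Fintype V] (hV : 2 ≤ Fintype.card V)
    (G : SimpleGraph V) (hG : G.Connected) (w : Sym2 V → ℝ)
    (T : SimpleGraph V) (hT : IsSpanningTree G T)
    (hmin : ∀ T' : SimpleGraph V, IsSpanningTree G T' →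
      (∑ᶠ e ∈ T.edgeSet, w e) ≤ ∑ᶠ e ∈ T'.edgeSet, w e) :
    ∀ T' : SimpleGraph V, IsSpanningTree G T' →
      sSup (w '' T.edgeSet) ≤ sSup (w '' T'.edgeSet) :=
  stmt_16_general hV G w T hT hmin
end
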